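/- arXiv:1608.02698 — 3 statements merged into one kernel-verified Lean document; each statement's English description precedes it below -/
import Mathlib

section
/- Let A be an n×n complex matrix partitioned as A = [[A11, A12],[A21, A22]] with A11 ∈ ℂ, A12 ∈ ℂ^{1×(n-1)}, A21 ∈ ℂ^{(n-1)×1}, A22 ∈ ℂ^{(n-1)×(n-1)}, and let ξ = [τ, 0, ..., 0]^T ∈ ℂ^{n×1} with τ ≠ 0. Then the pair (A, ξ) is controllable if and only if the pair (A22, A21) is controllable. -/
open Matrix

/-- Kalman-rank controllability: `rank [B, AB, ..., A^(n-1)B] = n`. -/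
def Controllable {ι κ : Type*} [Fintype ι] [Fintype κ] [DecidableEq ι]
    (A : Matrix ι ι ℂ) (B : Matrix ι κ ℂ) : Prop :=
  Matrix.rank (Matrix.of fun i (p : Fin (Fintype.card ι) × κ) =>
    (A ^ (p.1 : ℕ) * B) i p.2) = Fintype.card ι

/-!
By Cayley–Hamilton every power of `A` is a combination of `A ^ j` with `j < n`, so the Kalman
rank condition says that the Krylov space of `(A, B)`, spanned by the columns of all `A ^ j * B`,
is the whole space. The Krylov space is the smallest `A`-invariant subspace containing the
columns of `B`. For `A` in block form and `B = [B₁; 0]` with `B₁` surjective, the Krylov space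
contains every `[u; 0]`, and since `A [u; 0] = [A₁₁ u; A₂₁ u]` and `A [0; w] = [A₁₂ w; A₂₂ w]`,
a vector `[0; w]` lies in it exactly when `w` lies in the Krylov space of `(A₂₂, A₂₁)`.
-/

namespace Matrix

variable {R ι κ : Type*} [CommRing R] [Fintype ι] [DecidableEq ι]

open Polynomial in
theorem pow_mem_span_pow_lt_card [Nontrivial R] (A : Matrix ι ι R) (j : ℕ) :
    A ^ j ∈ Submodule.span R (Set.range fun i : Fin (Fintype.card ι) => A ^ (i : ℕ)) := by
  rw [pow_eq_aeval_mod_charpoly, aeval_eq_sum_range]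
  refine Submodule.sum_mem _ fun i _ => ?_
  by_cases hi : i < Fintype.card ι
  · exact Submodule.smul_mem _ _ (Submodule.subset_span ⟨⟨i, hi⟩, rfl⟩)
  · have hdeg : (X ^ j %ₘ A.charpoly).degree < i :=
      calc _ < A.charpoly.degree := degree_modByMonic_lt _ A.charpoly_monic
        _ = Fintype.card ι := A.charpoly_degree_eq_dim
        _ ≤ i := by exact_mod_cast not_lt.mp hi
    simp [coeff_eq_zero_of_degree_lt hdeg]

def krylovSpace (A : Matrix ι ι R) (B : Matrix ι κ R) : Submodule R (ι → R) :=
  Submodule.span R (Set.range fun p : ℕ × κ => A ^ p.1 *ᵥ B.col p.2)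

theorem mulVec_mem_krylovSpace (A : Matrix ι ι R) (B : Matrix ι κ R) [Fintype κ] (y : κ → R) :
    B *ᵥ y ∈ krylovSpace A B := by
  have hy : B *ᵥ y ∈ Submodule.span R (Set.range B.col) := by
    rw [← range_mulVecLin]; exact ⟨y, rfl⟩
  refine Submodule.span_mono ?_ hy
  rintro _ ⟨c, rfl⟩
  exact ⟨(0, c), by simp⟩

theorem mulVec_mem_krylovSpace_of_mem {A : Matrix ι ι R} {B : Matrix ι κ R} {x : ι → R}
    (hx : x ∈ krylovSpace A B) : A *ᵥ x ∈ krylovSpace A B := by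
  induction hx using Submodule.span_induction with
  | mem _ h =>
    obtain ⟨⟨j, c⟩, rfl⟩ := h
    exact Submodule.subset_span ⟨(j + 1, c), by simp [pow_succ', mulVec_mulVec]⟩
  | zero => simp
  | add _ _ _ _ hx hy => rw [mulVec_add]; exact add_mem hx hy
  | smul a _ _ hx => rw [mulVec_smul]; exact Submodule.smul_mem _ a hx

theorem krylovSpace_le [Fintype κ] {A : Matrix ι ι R} {B : Matrix ι κ R}
    {p : Submodule R (ι → R)}
    (hB : ∀ y, B *ᵥ y ∈ p) (hA : ∀ x ∈ p, A *ᵥ x ∈ p) : krylovSpace A B ≤ p := by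
  classical
  refine Submodule.span_le.mpr (Set.range_subset_iff.mpr fun ⟨j, c⟩ => ?_)
  induction j with
  | zero => simpa [mulVec_single_one] using hB (Pi.single c 1)
  | succ j ih =>
    simpa [pow_succ', mulVec_mulVec] using hA _ ih

theorem span_range_col_kalman_eq_krylovSpace [Nontrivial R] (A : Matrix ι ι R)
    (B : Matrix ι κ R) :
    Submodule.span R (Set.range (Matrix.of fun i (p : Fin (Fintype.card ι) × κ) =>
      (A ^ (p.1 : ℕ) * B) i p.2).col) = krylovSpace A B := by
  refine le_antisymm (Submodule.span_mono ?_) ?_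
  · rintro _ ⟨⟨j, c⟩, rfl⟩
    exact ⟨((j : ℕ), c), rfl⟩
  · refine Submodule.span_le.mpr (Set.range_subset_iff.mpr fun ⟨j, c⟩ => ?_)
    show A ^ j *ᵥ B.col c ∈ _
    have hj := pow_mem_span_pow_lt_card A j
    generalize A ^ j = M at hj ⊢
    induction hj using Submodule.span_induction with
    | mem _ h =>
      obtain ⟨i, rfl⟩ := h
      exact Submodule.subset_span ⟨(i, c), rfl⟩
    | zero => simp
    | add _ _ _ _ hM hN => simpa [add_mulVec] using add_mem hM hN
    | smul a _ _ hM => simpa [smul_mulVec] using Submodule.smul_mem _ a hM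

section Blocks

variable {m n p : Type*} [Fintype m] [Fintype n] [Fintype p] [DecidableEq m] [DecidableEq n]
  (A₁₁ : Matrix m m R) (A₁₂ : Matrix m n R) (A₂₁ : Matrix n m R) (A₂₂ : Matrix n n R)
  (B₁ : Matrix m p R)

theorem krylovSpace_fromBlocks_fromRows_le_comap_inr :
    krylovSpace (fromBlocks A₁₁ A₁₂ A₂₁ A₂₂) (fromRows B₁ 0) ≤
      (krylovSpace A₂₂ A₂₁).comap (LinearMap.funLeft R R Sum.inr) := by
  refine krylovSpace_le (fun y => ?_) fun x hx => ?_
  · show (fromRows B₁ 0 *ᵥ y) ∘ Sum.inr ∈ krylovSpace A₂₂ A₂₁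
    simp
  show (fromBlocks A₁₁ A₁₂ A₂₁ A₂₂ *ᵥ x) ∘ Sum.inr ∈ krylovSpace A₂₂ A₂₁
  rw [fromBlocks_mulVec, Sum.elim_comp_inr]
  exact add_mem (mulVec_mem_krylovSpace _ _ _) (mulVec_mem_krylovSpace_of_mem hx)

variable {B₁}

theorem sumElim_zero_mem_krylovSpace_fromBlocks_fromRows (hB₁ : Function.Surjective B₁.mulVec)
    (u : m → R) :
    u ⊕ᵥ 0 ∈ krylovSpace (fromBlocks A₁₁ A₁₂ A₂₁ A₂₂) (fromRows B₁ 0) := by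
  obtain ⟨y, rfl⟩ := hB₁ u
  simpa using mulVec_mem_krylovSpace (fromBlocks A₁₁ A₁₂ A₂₁ A₂₂) (fromRows B₁ 0) y

theorem krylovSpace_le_comap_fromBlocks_fromRows (hB₁ : Function.Surjective B₁.mulVec) :
    krylovSpace A₂₂ A₂₁ ≤ (krylovSpace (fromBlocks A₁₁ A₁₂ A₂₁ A₂₂) (fromRows B₁ 0)).comap
      (fromRows 0 (1 : Matrix n n R)).mulVecLin := by
  have hinl := sumElim_zero_mem_krylovSpace_fromBlocks_fromRows A₁₁ A₁₂ A₂₁ A₂₂ hB₁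
  refine krylovSpace_le (fun y => ?_) fun w hw => ?_
  · have h : (0 : m → R) ⊕ᵥ A₂₁ *ᵥ y =
        fromBlocks A₁₁ A₁₂ A₂₁ A₂₂ *ᵥ (y ⊕ᵥ 0) - (A₁₁ *ᵥ y ⊕ᵥ 0) := by
      ext (i | i) <;> simp [fromBlocks_mulVec]
    simpa [h] using sub_mem (mulVec_mem_krylovSpace_of_mem (hinl y)) (hinl (A₁₁ *ᵥ y))
  · have h : (0 : m → R) ⊕ᵥ A₂₂ *ᵥ w =
        fromBlocks A₁₁ A₁₂ A₂₁ A₂₂ *ᵥ ((0 : m → R) ⊕ᵥ w) - (A₁₂ *ᵥ w ⊕ᵥ 0) := by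
      ext (i | i) <;> simp [fromBlocks_mulVec]
    simp only [Submodule.mem_comap, mulVecLin_apply, fromRows_mulVec, zero_mulVec,
      one_mulVec] at hw ⊢
    rw [h]
    exact sub_mem (mulVec_mem_krylovSpace_of_mem hw) (hinl _)

theorem krylovSpace_fromBlocks_fromRows_eq_top_iff (hB₁ : Function.Surjective B₁.mulVec) :
    krylovSpace (fromBlocks A₁₁ A₁₂ A₂₁ A₂₂) (fromRows B₁ 0) = ⊤ ↔
      krylovSpace A₂₂ A₂₁ = ⊤ := by
  refine ⟨fun h => eq_top_iff.mpr fun w _ => ?_, fun h => eq_top_iff.mpr fun x _ => ?_⟩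
  · exact krylovSpace_fromBlocks_fromRows_le_comap_inr A₁₁ A₁₂ A₂₁ A₂₂ B₁
      (h ▸ Submodule.mem_top : (0 : m → R) ⊕ᵥ w ∈ _)
  · have hinr := krylovSpace_le_comap_fromBlocks_fromRows A₁₁ A₁₂ A₂₁ A₂₂ hB₁
      (h ▸ Submodule.mem_top : x ∘ Sum.inr ∈ _)
    have hsplit : x = (x ∘ Sum.inl ⊕ᵥ 0) + ((0 : m → R) ⊕ᵥ x ∘ Sum.inr) := by
      ext (i | i) <;> simp
    rw [hsplit]
    exact add_mem (sumElim_zero_mem_krylovSpace_fromBlocks_fromRows A₁₁ A₁₂ A₂₁ A₂₂ hB₁ _)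
      (by simpa using hinr)

end Blocks

end Matrix

theorem controllable_iff_krylovSpace_eq_top {ι κ : Type*} [Fintype ι] [Fintype κ] [DecidableEq ι]
    (A : Matrix ι ι ℂ) (B : Matrix ι κ ℂ) : Controllable A B ↔ krylovSpace A B = ⊤ := by
  rw [Controllable, rank_eq_finrank_span_cols, span_range_col_kalman_eq_krylovSpace,
    Submodule.eq_top_iff_finrank_eq, Module.finrank_fintype_fun_eq_card]

/-- With `ξ = [τ; 0]`, `τ ≠ 0`, the pair `(A, ξ)` is controllable iff `(A22, A21)` is. -/
theorem controllable_first_mode_iff {k : ℕ}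
    (A11 : ℂ) (A12 : Matrix (Fin 1) (Fin k) ℂ)
    (A21 : Matrix (Fin k) (Fin 1) ℂ) (A22 : Matrix (Fin k) (Fin k) ℂ)
    (τ : ℂ) (hτ : τ ≠ 0)
    (A : Matrix (Fin 1 ⊕ Fin k) (Fin 1 ⊕ Fin k) ℂ)
    (hA : A = Matrix.fromBlocks (Matrix.of fun _ _ => A11) A12 A21 A22)
    (ξ : Matrix (Fin 1 ⊕ Fin k) (Fin 1) ℂ)
    (hξ : ξ = Matrix.of fun i _ => Sum.elim (fun _ => τ) (fun _ => (0 : ℂ)) i) :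
    Controllable A ξ ↔ Controllable A22 A21 := by
  have hξ' : ξ = fromRows (of fun _ _ => τ) 0 := by
    subst hξ
    ext (i | i) j <;> rfl
  have hτ_surj : Function.Surjective (of fun _ _ => τ : Matrix (Fin 1) (Fin 1) ℂ).mulVec :=
    fun u => ⟨fun _ => τ⁻¹ * u 0, funext fun i => by
      simp [mulVec, dotProduct, Subsingleton.elim i 0, mul_inv_cancel_left₀ hτ]⟩
  rw [controllable_iff_krylovSpace_eq_top, controllable_iff_krylovSpace_eq_top, hA, hξ',
    krylovSpace_fromBlocks_fromRows_eq_top_iff _ _ _ _ hτ_surj]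
end

section
/- Fix z̄ ∈ ℂ with Im(z̄) > 0. Define Δ as the set of 2×2 complex symmetric matrices Z with Im(Z) positive definite, (diag[1,-1]·Z)^2 = -I2, and det(Z + (1/z̄)I2) = 0. Then Δ contains exactly two matrices: Z = [[(z̄²-1)/(2z̄), (z̄²+1)/(2z̄)],[(z̄²+1)/(2z̄), (z̄²-1)/(2z̄)]] and Z = [[(z̄²-1)/(2z̄), -(z̄²+1)/(2z̄)],[-(z̄²+1)/(2z̄), (z̄²-1)/(2z̄)]]. -/
/-!
Writing a symmetric `Z` as `!![a, b; b, d]`, the condition `(diag[1,-1] Z)² = -1` gives `a² - b² = d² - b² = -1`,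
so `a = ±d`, and `a = -d` is excluded because `Im a, Im d > 0`. With `a = d` the determinant condition
`(a + 1/z)² = b² = a² + 1` is linear in `a`, forcing `a = (z² - 1)/(2z)` and `b = ±(z² + 1)/(2z)`.
Conversely, these two entries have sum `z` and difference `-1/z`, whose imaginary parts `Im z` and
`Im z / |z|²` are the eigenvalues of the imaginary part of `Z`.
-/

open Matrix

namespace Matrix

lemma isSymm_fin_two_iff {α : Type*} {A : Matrix (Fin 2) (Fin 2) α} :
    A.IsSymm ↔ ∃ a b d, A = !![a, b; b, d] := by
  refine ⟨fun h => ⟨A 0 0, A 0 1, A 1 1, ?_⟩, ?_⟩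
  · nth_rewrite 1 [eta_fin_two A]
    rw [h.apply 0 1]
  · rintro ⟨a, b, d, rfl⟩
    ext i j
    fin_cases i <;> fin_cases j <;> rfl

lemma det_fin_two_add_smul_one {R : Type*} [CommRing R] (a b c d w : R) :
    det (!![a, b; c, d] + w • (1 : Matrix (Fin 2) (Fin 2) R)) = (a + w) * (d + w) - b * c := by
  rw [one_fin_two, smul_of, of_add_of, ← det_fin_two_of]
  congr 1
  ext i j
  fin_cases i <;> fin_cases j <;> simp

lemma diagonal_one_neg_one_mul_sq_eq_neg_one_iff {R : Type*} [CommRing R] {a b d : R} :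
    (diagonal ![(1 : R), -1] * !![a, b; b, d]) ^ 2 = -1 ↔
      a ^ 2 - b ^ 2 = -1 ∧ b * (a - d) = 0 ∧ d ^ 2 - b ^ 2 = -1 := by
  have hJ : diagonal ![(1 : R), -1] * !![a, b; b, d] = !![a, b; -b, -d] := by
    ext i j
    fin_cases i <;> fin_cases j <;> simp
  rw [hJ, sq, mul_fin_two, ← Matrix.ext_iff]
  simp only [Fin.forall_fin_two, of_apply, cons_val', cons_val_zero, cons_val_one, empty_val',
    cons_val_fin_one, neg_apply, one_apply_eq, one_apply_ne zero_ne_one, one_apply_ne one_ne_zero]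
  constructor
  · rintro ⟨⟨h00, h01⟩, -, h11⟩
    exact ⟨by linear_combination h00, by linear_combination h01, by linear_combination h11⟩
  · rintro ⟨h00, h01, h11⟩
    exact ⟨⟨by linear_combination h00, by linear_combination h01⟩,
      ⟨by linear_combination -h01, by linear_combination h11⟩⟩

lemma posDef_of_add_pos_of_sub_pos {R : Type*} [Field R] [LinearOrder R] [IsStrictOrderedRing R]
    [StarRing R] [TrivialStar R] {p q : R} (hadd : 0 < p + q) (hsub : 0 < p - q) :
    (!![p, q; q, p]).PosDef := by
  refine .of_dotProduct_mulVec_pos ?_ fun x hx => ?_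
  · ext i j
    fin_cases i <;> fin_cases j <;> simp
  · have hquad : star x ⬝ᵥ (!![p, q; q, p] *ᵥ x) =
        ((p + q) * (x 0 + x 1) ^ 2 + (p - q) * (x 0 - x 1) ^ 2) / 2 := by
      simp [dotProduct, Fin.sum_univ_two]
      ring
    have hne : x 0 + x 1 ≠ 0 ∨ x 0 - x 1 ≠ 0 := by
      by_contra! h
      have h0 : x 0 = 0 := by linear_combination (h.1 + h.2) / 2
      have h1 : x 1 = 0 := by linear_combination (h.1 - h.2) / 2
      exact hx (funext fun i => by fin_cases i <;> assumption)
    rw [hquad]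
    rcases hne with h | h <;> positivity

end Matrix

def InDelta (z : ℂ) (Z : Matrix (Fin 2) (Fin 2) ℂ) : Prop :=
  Z.IsSymm ∧ (of fun i j => (Z i j).im).PosDef ∧ (diagonal ![(1 : ℂ), -1] * Z) ^ 2 = -1 ∧
    det (Z + (1 / z) • (1 : Matrix (Fin 2) (Fin 2) ℂ)) = 0

lemma inDelta_iff {z : ℂ} {Z : Matrix (Fin 2) (Fin 2) ℂ} :
    InDelta z Z ↔ ∃ a b d, Z = !![a, b; b, d] ∧ (!![a.im, b.im; b.im, d.im]).PosDef ∧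
      (a ^ 2 - b ^ 2 = -1 ∧ b * (a - d) = 0 ∧ d ^ 2 - b ^ 2 = -1) ∧
      (a + 1 / z) * (d + 1 / z) - b * b = 0 := by
  have him (a b d : ℂ) : (of fun i j => (!![a, b; b, d] i j).im) = !![a.im, b.im; b.im, d.im] := by
    ext i j
    fin_cases i <;> fin_cases j <;> rfl
  constructor
  · rintro ⟨hsymm, hpos, hsq, hdet⟩
    obtain ⟨a, b, d, rfl⟩ := isSymm_fin_two_iff.mp hsymm
    rw [him] at hpos
    rw [diagonal_one_neg_one_mul_sq_eq_neg_one_iff] at hsq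
    rw [det_fin_two_add_smul_one] at hdet
    exact ⟨a, b, d, rfl, hpos, hsq, hdet⟩
  · rintro ⟨a, b, d, rfl, hpos, hsq, hdet⟩
    refine ⟨isSymm_fin_two_iff.mpr ⟨a, b, d, rfl⟩, ?_, ?_, ?_⟩
    · rwa [him]
    · rwa [diagonal_one_neg_one_mul_sq_eq_neg_one_iff]
    · rwa [det_fin_two_add_smul_one]

lemma inDelta_of_add_eq_of_sub_eq {z a c : ℂ} (hz : 0 < z.im) (hadd : a + c = z)
    (hsub : a - c = -z⁻¹) : InDelta z !![a, c; c, a] ∧ InDelta z !![a, -c; -c, a] := by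
  have hz0 : z ≠ 0 := by rintro rfl; simp at hz
  have hadd_im : 0 < a.im + c.im := by rw [← Complex.add_im, hadd]; exact hz
  have hsub_im : 0 < a.im - c.im := by
    rw [← Complex.sub_im, hsub, Complex.neg_im, Complex.inv_im, neg_div, neg_neg]
    exact div_pos hz (Complex.normSq_pos.mpr hz0)
  have hsq : a ^ 2 - c ^ 2 = -1 := by
    linear_combination (a - c) * hadd + z * hsub - mul_inv_cancel₀ hz0
  have hdet : (a + 1 / z) * (a + 1 / z) - c * c = 0 := by
    linear_combination (a + c + 1 / z) * hsub
  refine ⟨inDelta_iff.mpr ⟨a, c, a, rfl, ?_, ?_, ?_⟩, inDelta_iff.mpr ⟨a, -c, a, rfl, ?_, ?_, ?_⟩⟩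
  · exact posDef_of_add_pos_of_sub_pos hadd_im hsub_im
  · exact ⟨hsq, by ring, hsq⟩
  · exact hdet
  · rw [Complex.neg_im]
    exact posDef_of_add_pos_of_sub_pos (by linarith) (by linarith)
  · exact ⟨by linear_combination hsq, by ring, by linear_combination hsq⟩
  · linear_combination hdet

lemma delta_entries_eq {z a b d : ℂ} (hz : z ≠ 0) (ha : 0 < a.im) (hd : 0 < d.im)
    (hab : a ^ 2 - b ^ 2 = -1) (hdb : d ^ 2 - b ^ 2 = -1)
    (hdet : (a + 1 / z) * (d + 1 / z) - b * b = 0) :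
    d = a ∧ a = (z ^ 2 - 1) / (2 * z) ∧
      (b = (z ^ 2 + 1) / (2 * z) ∨ b = -((z ^ 2 + 1) / (2 * z))) := by
  have hda : d = a := by
    have hsum : d + a ≠ 0 := fun h => by
      have := congrArg Complex.im h
      simp only [Complex.add_im, Complex.zero_im] at this
      linarith
    have : (d - a) * (d + a) = 0 := by linear_combination hdb - hab
    exact sub_eq_zero.mp ((mul_eq_zero.mp this).resolve_right hsum)
  subst hda
  have ha_eq : d = (z ^ 2 - 1) / (2 * z) := by
    have h : 2 * d / z + 1 / z ^ 2 = 1 := by linear_combination hdet - hab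
    field_simp at h
    rw [eq_div_iff (by simpa)]
    linear_combination h
  subst ha_eq
  refine ⟨rfl, rfl, sq_eq_sq_iff_eq_or_eq_neg.mp ?_⟩
  have hC : ((z ^ 2 - 1) / (2 * z)) ^ 2 + 1 = ((z ^ 2 + 1) / (2 * z)) ^ 2 := by
    field_simp
    ring
  linear_combination hC - hab

theorem Delta_eq_pair (z : ℂ) (hz : 0 < z.im) :
    {Z : Matrix (Fin 2) (Fin 2) ℂ |
        Z.IsSymm ∧
        (Matrix.of fun i j => (Z i j).im).PosDef ∧
        (Matrix.diagonal ![(1 : ℂ), -1] * Z) ^ 2 = -1 ∧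
        Matrix.det (Z + (1 / z) • (1 : Matrix (Fin 2) (Fin 2) ℂ)) = 0} =
      {!![(z ^ 2 - 1) / (2 * z), (z ^ 2 + 1) / (2 * z);
          (z ^ 2 + 1) / (2 * z), (z ^ 2 - 1) / (2 * z)],
       !![(z ^ 2 - 1) / (2 * z), -((z ^ 2 + 1) / (2 * z));
          -((z ^ 2 + 1) / (2 * z)), (z ^ 2 - 1) / (2 * z)]} := by
  have hz0 : z ≠ 0 := by rintro rfl; simp at hz
  have hadd : (z ^ 2 - 1) / (2 * z) + (z ^ 2 + 1) / (2 * z) = z := by field_simp; ring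
  have hsub : (z ^ 2 - 1) / (2 * z) - (z ^ 2 + 1) / (2 * z) = -z⁻¹ := by field_simp; ring
  ext Z
  constructor
  · intro hZ
    obtain ⟨a, b, d, rfl, hpos, ⟨hab, -, hdb⟩, hdet⟩ := inDelta_iff.mp hZ
    obtain ⟨rfl, rfl, rfl | rfl⟩ :=
      delta_entries_eq hz0 (hpos.diag_pos (i := 0)) (hpos.diag_pos (i := 1)) hab hdb hdet
    exacts [Or.inl rfl, Or.inr rfl]
  · rintro (rfl | rfl)
    exacts [(inDelta_of_add_eq_of_sub_eq hz hadd hsub).1,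
      (inDelta_of_add_eq_of_sub_eq hz hadd hsub).2]
end

section
/- Let z̄ = x + iy with x, y ∈ ℝ, y > 0, and let Z = [[z11, z12],[z12, z11]] where z11 = (z̄²-1)/(2z̄) and z12 = ±(z̄²+1)/(2z̄). Then the imaginary part of Z is a positive definite 2×2 real symmetric matrix. -/
/-!
With `z₁₁ = (z - z⁻¹) / 2` and `z₁₂ = ±(z + z⁻¹) / 2`, and `Im z⁻¹ = -Im z / |z|²`, the imaginary
parts are `a = (y + y/|z|²) / 2` and `b = ±(y - y/|z|²) / 2`. Both `y` and `y/|z|²` are positive,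
so `|b| < a`, which forces positive definiteness of `[[a, b], [b, a]]`.
-/

open Matrix

theorem Matrix.posDef_of_abs_lt {a b : ℝ} (h : |b| < a) : !![a, b; b, a].PosDef := by
  refine posDef_iff_dotProduct_mulVec.mpr ⟨?_, fun v hv => ?_⟩
  · ext i j
    fin_cases i <;> fin_cases j <;> rfl
  · have hnorm : 0 < v 0 ^ 2 + v 1 ^ 2 := by
      by_contra! h0
      refine hv (funext fun i => ?_)
      fin_cases i <;> simp only [Fin.zero_eta, Fin.mk_one, Fin.isValue, Pi.zero_apply] <;> nlinarith
    have hq :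
        star v ⬝ᵥ (!![a, b; b, a] *ᵥ v) = a * (v 0 ^ 2 + v 1 ^ 2) + 2 * b * (v 0 * v 1) := by
      simp only [dotProduct, Pi.star_apply, star_trivial, mulVec, of_apply, cons_val',
        cons_val_fin_one, Fin.sum_univ_two, Fin.isValue, cons_val_zero, cons_val_one]
      ring
    have huv : 2 * |v 0 * v 1| ≤ v 0 ^ 2 + v 1 ^ 2 := by
      rw [abs_mul]; nlinarith [sq_nonneg (|v 0| - |v 1|), sq_abs (v 0), sq_abs (v 1)]
    rw [hq]
    nlinarith [neg_abs_le (b * (v 0 * v 1)), abs_mul b (v 0 * v 1), abs_nonneg b,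
      abs_nonneg (v 0 * v 1)]

theorem Complex.sq_sub_one_div_two_mul_im (z : ℂ) :
    ((z ^ 2 - 1) / (2 * z)).im = (z.im + z.im / normSq z) / 2 := by
  have : (z ^ 2 - 1) / (2 * z) = (z - z⁻¹) / 2 := by
    rcases eq_or_ne z 0 with rfl | hz
    · simp
    · field_simp
  rw [this, div_ofNat_im, sub_im, inv_im]
  ring

theorem Complex.sq_add_one_div_two_mul_im (z : ℂ) :
    ((z ^ 2 + 1) / (2 * z)).im = (z.im - z.im / normSq z) / 2 := by
  have : (z ^ 2 + 1) / (2 * z) = (z + z⁻¹) / 2 := by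
    rcases eq_or_ne z 0 with rfl | hz
    · simp
    · field_simp
  rw [this, div_ofNat_im, add_im, inv_im]
  ring

theorem Complex.abs_im_sq_add_one_div_lt {z : ℂ} (hz : 0 < z.im) :
    |((z ^ 2 + 1) / (2 * z)).im| < ((z ^ 2 - 1) / (2 * z)).im := by
  have hq : 0 < z.im / normSq z := div_pos hz (normSq_pos.mpr (ne_of_apply_ne im hz.ne'))
  rw [sq_add_one_div_two_mul_im, sq_sub_one_div_two_mul_im, abs_lt]
  constructor <;> linarith

theorem im_posDef (x y : ℝ) (hy : 0 < y) (z : ℂ)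
    (hz : z = (x : ℂ) + (y : ℂ) * Complex.I)
    (z11 z12 : ℂ) (h11 : z11 = (z ^ 2 - 1) / (2 * z))
    (h12 : z12 = (z ^ 2 + 1) / (2 * z) ∨ z12 = -((z ^ 2 + 1) / (2 * z)))
    (Z : Matrix (Fin 2) (Fin 2) ℂ) (hZ : Z = !![z11, z12; z12, z11]) :
    (Matrix.of fun i j => (Z i j).im).PosDef := by
  have him : 0 < z.im := by simpa [hz] using hy
  have hZim : (Matrix.of fun i j => (Z i j).im) = !![z11.im, z12.im; z12.im, z11.im] := by
    subst hZ
    ext i j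
    fin_cases i <;> fin_cases j <;> rfl
  rw [hZim]
  apply posDef_of_abs_lt
  rw [h11]
  rcases h12 with rfl | rfl
  · exact Complex.abs_im_sq_add_one_div_lt him
  · rw [Complex.neg_im, abs_neg]
    exact Complex.abs_im_sq_add_one_div_lt him
end
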